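/- arXiv:1706.03624 — 4 statements merged into one kernel-verified Lean document; each statement's English description precedes it below -/
import Mathlib

section
/- Let X be a perfectly paracompact topological space, Y a topological space, and f : X → Y a piecewise continuous mapping. Then f is Δ⁰₂-measurable. -/
open Set Topology

/-- A set is Fσ if it is a countable union of closed sets. -/
def IsFsigma {X : Type*} [TopologicalSpace X] (s : Set X) : Prop :=
  ∃ C : ℕ → Set X, (∀ n, IsClosed (C n)) ∧ s = ⋃ n, C n

/-- A map is piecewise continuous if its domain is covered by countably many
closed sets on each of which the map is continuous. -/
def PiecewiseContinuous {X Y : Type*} [TopologicalSpace X] [TopologicalSpace Y]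
    (f : X → Y) : Prop :=
  ∃ C : ℕ → Set X, (∀ n, IsClosed (C n)) ∧ (⋃ n, C n) = Set.univ ∧
    ∀ n, ContinuousOn f (C n)

/-- A map is Δ⁰₂-measurable if preimages of open sets are both Fσ and Gδ. -/
def Delta02Measurable {X Y : Type*} [TopologicalSpace X] [TopologicalSpace Y]
    (f : X → Y) : Prop :=
  ∀ U : Set Y, IsOpen U → IsFsigma (f ⁻¹' U) ∧ IsGδ (f ⁻¹' U)

/-- A map is Σ⁰₂-measurable if preimages of open sets are Fσ. -/
def Sigma02Measurable {X Y : Type*} [TopologicalSpace X] [TopologicalSpace Y]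
    (f : X → Y) : Prop :=
  ∀ U : Set Y, IsOpen U → IsFsigma (f ⁻¹' U)

/-- X ⊆ Z is Souslin-F in Z: the result of the A-operation applied to a system
of closed subsets of Z, where `(List.range n).map α` encodes α|n. -/
def SouslinF {Z : Type*} [TopologicalSpace Z] (X : Set Z) : Prop :=
  ∃ F : List ℕ → Set Z, (∀ s, IsClosed (F s)) ∧
    X = ⋃ α : ℕ → ℕ, ⋂ n : ℕ, F ((List.range n).map α)

/-- A space is completely Baire if every closed subspace is a Baire space. -/
def CompletelyBaire (Z : Type*) [TopologicalSpace Z] : Prop :=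
  ∀ s : Set Z, IsClosed s → BaireSpace s

/-- Membership in the σ-ideal I_f: A is contained in an Fσ set F such that
the restriction f|F is piecewise continuous. -/
def MemIf {X Y : Type*} [TopologicalSpace X] [TopologicalSpace Y]
    (f : X → Y) (A : Set X) : Prop :=
  ∃ F : Set X, IsFsigma F ∧ A ⊆ F ∧ PiecewiseContinuous (F.restrict f)

/-- A^f = f⁻¹(Y \ cl(A)). -/
def Af {X Y : Type*} [TopologicalSpace Y] (f : X → Y) (A : Set Y) : Set X :=
  f ⁻¹' (closure A)ᶜ

/-- The pair (x, X′) is f-irreducible outside A: for every open neighborhood V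
of x, A^f ∩ X′ ∩ V ∉ I_f. -/
def IrredOutside {X Y : Type*} [TopologicalSpace X] [TopologicalSpace Y]
    (f : X → Y) (x : X) (X' : Set X) (A : Set Y) : Prop :=
  ∀ V : Set X, IsOpen V → x ∈ V → ¬ MemIf f (Af f A ∩ X' ∩ V)

theorem aux_delta02 {X Y : Type*} [TopologicalSpace X] [TopologicalSpace Y]
    (hGdelta : ∀ s : Set X, IsClosed s → IsGδ s)
    (f : X → Y) (C : ℕ → Set X) (hC : ∀ n, IsClosed (C n))
    (hCu : (⋃ n, C n) = Set.univ) (hcont : ∀ n, ContinuousOn f (C n))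
    (U : Set Y) (hU : IsOpen U) :
    IsFsigma (f ⁻¹' U) ∧ IsGδ (f ⁻¹' U) := by
  constructor
  · -- Fσ
    choose V hVopen hVeq using fun n => continuousOn_iff'.1 (hcont n) U hU
    choose W hWopen hWeq using fun n => (hGdelta (V n)ᶜ (hVopen n).isClosed_compl).eq_iInter_nat
    refine ⟨fun k => C k.unpair.1 ∩ (W k.unpair.1 k.unpair.2)ᶜ,
      fun k => (hC _).inter (hWopen _ _).isClosed_compl, ?_⟩
    ext x
    simp only [mem_iUnion, mem_inter_iff, mem_compl_iff]
    constructor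
    · intro hx
      have hxuniv : x ∈ ⋃ n, C n := hCu ▸ mem_univ x
      obtain ⟨n, hn⟩ := mem_iUnion.1 hxuniv
      have : x ∈ V n := by
        have := hVeq n ▸ (mem_inter hx hn : x ∈ f ⁻¹' U ∩ C n)
        exact this.1
      have : x ∉ (V n)ᶜ := fun h => h this
      rw [hWeq n] at this
      simp only [mem_iInter, not_forall] at this
      obtain ⟨m, hm⟩ := this
      exact ⟨n.pair m, by simpa [Nat.unpair_pair] using ⟨hn, hm⟩⟩
    · rintro ⟨k, hxC, hxW⟩
      have hxV : x ∈ V k.unpair.1 := by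
        by_contra h
        have : x ∈ (V k.unpair.1)ᶜ := h
        rw [hWeq] at this
        exact hxW (mem_iInter.1 this _)
      have : x ∈ V k.unpair.1 ∩ C k.unpair.1 := ⟨hxV, hxC⟩
      rw [← hVeq] at this
      exact this.1
  · -- Gδ
    have : f ⁻¹' U = ⋂ n, (C n ∩ f ⁻¹' Uᶜ)ᶜ := by
      ext x
      simp only [mem_iInter, mem_compl_iff, mem_inter_iff, mem_preimage, not_and, mem_compl_iff,
        not_not]
      constructor
      · intro hx n _; exact hx
      · intro h
        have hxuniv : x ∈ ⋃ n, C n := hCu ▸ mem_univ x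
        obtain ⟨n, hn⟩ := mem_iUnion.1 hxuniv
        exact h n hn
    rw [this]
    exact .iInter fun n =>
      (((hcont n).preimage_isClosed_of_isClosed (hC n) hU.isClosed_compl).isOpen_compl).isGδ

/-- On a perfectly paracompact space, a piecewise continuous map is
Δ⁰₂-measurable. -/
theorem statement3 {X Y : Type*} [TopologicalSpace X] [TopologicalSpace Y]
    [ParacompactSpace X] (hGdelta : ∀ s : Set X, IsClosed s → IsGδ s)
    (f : X → Y) (hf : PiecewiseContinuous f) :
    Delta02Measurable f := by
  obtain ⟨C, hC, hCu, hcont⟩ := hf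
  exact fun U hU => aux_delta02 hGdelta f C hC hCu hcont U hU
end

section
/- Let f : X → Y be a mapping from a perfectly paracompact space X to a topological space Y, and let X′ ⊆ X. Let G be the union of all open sets U ⊆ X such that U ∩ X′ ∈ I_f. Then X′ ∩ G ∈ I_f. -/
open Set Topology

section AuxIf
variable {X Y : Type*} [TopologicalSpace X] [TopologicalSpace Y] {f : X → Y}

lemma aux_continuousOn_of_restrict {F S : Set X} (hSF : S ⊆ F)
    (h : ContinuousOn (F.restrict f) (Subtype.val ⁻¹' S)) : ContinuousOn f S := by
  rw [continuousOn_iff_continuous_restrict] at h ⊢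
  have he : Continuous (fun x : S => (⟨⟨x.1, hSF x.2⟩, x.2⟩ :
      (Subtype.val ⁻¹' S : Set F))) :=
    (continuous_subtype_val.subtype_mk _).subtype_mk _
  exact h.comp he

lemma aux_restrict_continuousOn {F S : Set X} (hSF : S ⊆ F)
    (h : ContinuousOn f S) : ContinuousOn (F.restrict f) (Subtype.val ⁻¹' S) := by
  rw [continuousOn_iff_continuous_restrict] at h ⊢
  have he : Continuous (fun x : (Subtype.val ⁻¹' S : Set F) => (⟨x.1.1, x.2⟩ : S)) :=
    (continuous_subtype_val.comp continuous_subtype_val).subtype_mk _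
  exact h.comp he

lemma memIf_iff (f : X → Y) (A : Set X) :
    MemIf f A ↔ ∃ D : ℕ → Set X, (∀ n, IsClosed (D n)) ∧ A ⊆ ⋃ n, D n ∧
      ∀ n, ContinuousOn f (D n) := by
  constructor
  · rintro ⟨F, ⟨E, hEc, hFE⟩, hAF, C, hCc, hCu, hCcont⟩
    choose C' hC'c hC' using fun n => (isClosed_induced_iff.1 (hCc n))
    have e := Denumerable.eqv (ℕ × ℕ)
    refine ⟨fun m => C' (e.symm m).1 ∩ E (e.symm m).2,
      fun m => ((hC'c _).inter (hEc _)), ?_, ?_⟩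
    · intro x hx
      have hxF : x ∈ F := hAF hx
      obtain ⟨m, hm⟩ : ∃ m, x ∈ E m := by
        have := hFE ▸ hxF; exact mem_iUnion.1 this
      obtain ⟨n, hn⟩ : ∃ n, (⟨x, hxF⟩ : F) ∈ C n := by
        have : (⟨x, hxF⟩ : F) ∈ ⋃ n, C n := hCu ▸ mem_univ _
        exact mem_iUnion.1 this
      have hxC' : x ∈ C' n := by
        rw [← hC' n] at hn; exact hn
      exact mem_iUnion.2 ⟨e (n, m), by simp [hxC', hm]⟩
    · intro m
      set n := (e.symm m).1
      set k := (e.symm m).2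
      have hsub : C' n ∩ E k ⊆ F := by
        intro x hx; rw [hFE]; exact mem_iUnion.2 ⟨k, hx.2⟩
      refine aux_continuousOn_of_restrict hsub ?_
      refine (hCcont n).mono ?_
      intro x hx
      have : x.1 ∈ C' n := hx.1
      rw [← hC' n]; exact this
  · rintro ⟨D, hDc, hAD, hDcont⟩
    refine ⟨⋃ n, D n, ⟨D, hDc, rfl⟩, hAD, fun n => Subtype.val ⁻¹' D n,
      fun n => (hDc n).preimage continuous_subtype_val, ?_, ?_⟩
    · ext x; simp only [mem_iUnion, mem_univ, iff_true, mem_preimage]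
      exact mem_iUnion.1 x.2
    · exact fun n => aux_restrict_continuousOn (subset_iUnion D n) (hDcont n)
end AuxIf

/-- Lemma on the ideal I_f: if G is the union of all open sets U with
U ∩ X′ ∈ I_f, then X′ ∩ G ∈ I_f (X perfectly paracompact). -/
theorem statement5 {X Y : Type*} [TopologicalSpace X] [TopologicalSpace Y]
    [ParacompactSpace X] (hGdelta : ∀ s : Set X, IsClosed s → IsGδ s)
    (f : X → Y) (X' : Set X)
    (G : Set X) (hG : G = ⋃₀ {U : Set X | IsOpen U ∧ MemIf f (U ∩ X')}) :
    MemIf f (X' ∩ G) := by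
  classical
  have hGopen : IsOpen G := hG ▸ isOpen_sUnion (fun U hU => hU.1)
  -- G is an Fσ set: obtain closed sets K n with G = ⋃ n, K n
  obtain ⟨T, hTo, hTc, hTeq⟩ := (hGdelta Gᶜ hGopen.isClosed_compl)
  rcases T.eq_empty_or_nonempty with hT | hT
  · -- G = ∅
    have : G = ∅ := by
      have : Gᶜ = univ := by rw [hTeq, hT, sInter_empty]
      simpa using congrArg compl this
    rw [memIf_iff]
    exact ⟨fun _ => ∅, fun _ => isClosed_empty, by simp [this], fun _ => continuousOn_empty f⟩
  obtain ⟨g, hg⟩ := hTc.exists_eq_range hT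
  set K : ℕ → Set X := fun n => (g n)ᶜ with hK
  have hKc : ∀ n, IsClosed (K n) := fun n =>
    (hTo (g n) (hg ▸ mem_range_self n)).isClosed_compl
  have hGK : G = ⋃ n, K n := by
    have : Gᶜ = ⋂ n, g n := by rw [hTeq, hg, sInter_range]
    rw [← compl_compl G, this, compl_iInter]
  -- index type for the cover
  set ι := {U : Set X // IsOpen U ∧ MemIf f (U ∩ X')} with hι
  -- For each n, build closed sets T n k with ContinuousOn f on each,
  -- covering K n ∩ X'
  have key : ∀ n : ℕ, ∃ T : ℕ → Set X, (∀ k, IsClosed (T k)) ∧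
      (K n ∩ X' ⊆ ⋃ k, T k) ∧ ∀ k, ContinuousOn f (T k) := by
    intro n
    set u : Option ι → Set X := fun o => o.elim (K n)ᶜ Subtype.val with hu
    have huo : ∀ o, IsOpen (u o) := by
      rintro (_ | U)
      · exact (hKc n).isOpen_compl
      · exact U.2.1
    have huc : ⋃ o, u o = univ := by
      apply eq_univ_of_forall
      intro x
      by_cases hx : x ∈ K n
      · have hxG : x ∈ G := hGK ▸ mem_iUnion.2 ⟨n, hx⟩
        rw [hG] at hxG
        obtain ⟨U, hU, hxU⟩ := hxG
        exact mem_iUnion.2 ⟨some ⟨U, hU⟩, hxU⟩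
      · exact mem_iUnion.2 ⟨none, hx⟩
    obtain ⟨v, hvo, hvc, hvlf, hvu⟩ := precise_refinement u huo huc
    -- each v (some o) ∩ X' is in the ideal; get its closed decomposition
    have hmem : ∀ o : ι, ∃ D : ℕ → Set X, (∀ k, IsClosed (D k)) ∧
        (v (some o) ∩ X' ⊆ ⋃ k, D k) ∧ ∀ k, ContinuousOn f (D k) := by
      intro o
      obtain ⟨D, hDc, hDcov, hDcont⟩ := (memIf_iff f (o.1 ∩ X')).1 o.2.2
      exact ⟨D, hDc, fun x hx => hDcov ⟨hvu (some o) hx.1, hx.2⟩, hDcont⟩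
    choose D hDc hDcov hDcont using hmem
    set E : ℕ → ι → Set X := fun k o => D o k ∩ closure (v (some o)) with hE
    have hlf : ∀ k, LocallyFinite (E k) := by
      intro k
      refine LocallyFinite.subset ?_ (fun o => inter_subset_right)
      exact ((hvlf.comp_injective (Option.some_injective ι)).closure)
    refine ⟨fun k => ⋃ o, E k o, ?_, ?_, ?_⟩
    · exact fun k => (hlf k).isClosed_iUnion
        (fun o => (hDc o k).inter isClosed_closure)
    · intro x hx
      obtain ⟨a, ha⟩ := mem_iUnion.1 (hvc ▸ mem_univ x : x ∈ ⋃ b, v b)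
      cases a with
      | none => exact absurd hx.1 (hvu none ha)
      | some o =>
        obtain ⟨k, hk⟩ := mem_iUnion.1 (hDcov o ⟨ha, hx.2⟩)
        exact mem_iUnion.2 ⟨k, mem_iUnion.2 ⟨o, hk, subset_closure ha⟩⟩
    · intro k
      exact (hlf k).continuousOn_iUnion
        (fun o => (hDc o k).inter isClosed_closure)
        (fun o => (hDcont o k).mono inter_subset_left)
  choose T hTc' hTcov hTcont using key
  rw [memIf_iff]
  have e := Denumerable.eqv (ℕ × ℕ)
  refine ⟨fun m => T (e.symm m).1 (e.symm m).2, fun m => hTc' _ _, ?_, fun m => hTcont _ _⟩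
  intro x hx
  obtain ⟨n, hn⟩ := mem_iUnion.1 (hGK ▸ hx.2 : x ∈ ⋃ n, K n)
  obtain ⟨k, hk⟩ := mem_iUnion.1 (hTcov n ⟨hn, hx.1⟩)
  exact mem_iUnion.2 ⟨e (n, k), by simpa using hk⟩
end

section
/- Let X be a perfectly paracompact space and Y a regular space. Suppose f : X → Y is a Σ⁰₂-measurable mapping, X′ is a subset of X, and A ⊆ Y is an open set such that X′ ⊆ A^f. Then the following are equivalent: (i) X′ ∉ I_f; (ii) there exist a point x ∈ cl(X′) ∩ A^f and an open set U ⊆ Y strongly disjoint from A such that f(x) ∈ U and the pair (x, X′) is f-irreducible outside U. -/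
/-!
Let `L` be the closed set of points near which `X'` is not locally in `I_f`. Paracompactness
and perfect normality glue the local witnesses, so `X' \ L ∈ I_f`. If no pair `(x, U)` as in
(ii) existed, `f` would be continuous on `A^f ∩ cl X' ∩ L`, an Fσ set because `f` is
Σ⁰₂-measurable; hence `X' ∩ L ∈ I_f` as well.
-/

open Set Topology

section Fsigma

variable {X : Type*} [TopologicalSpace X]

theorem IsOpen.isFsigma (hGδ : ∀ s : Set X, IsClosed s → IsGδ s) {U : Set X}
    (hU : IsOpen U) : IsFsigma U := by
  obtain ⟨G, hGo, hG⟩ := isGδ_iff_eq_iInter_nat.mp (hGδ _ hU.isClosed_compl)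
  exact ⟨fun n => (G n)ᶜ, fun n => (hGo n).isClosed_compl,
    by rw [← compl_iInter, ← hG, compl_compl]⟩

theorem IsFsigma.inter_isClosed {s t : Set X} (hs : IsFsigma s) (ht : IsClosed t) :
    IsFsigma (s ∩ t) := by
  obtain ⟨C, hC, rfl⟩ := hs
  exact ⟨fun n => C n ∩ t, fun n => (hC n).inter ht, iUnion_inter t C⟩

end Fsigma

section MemIf

variable {X Y : Type*} [TopologicalSpace X] [TopologicalSpace Y] {f : X → Y} {S T : Set X}

theorem MemIf.mono (hST : S ⊆ T) (h : MemIf f T) : MemIf f S :=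
  let ⟨F, hF, hTF, hpc⟩ := h
  ⟨F, hF, hST.trans hTF, hpc⟩

theorem memIf_iff_exists_closed_cover :
    MemIf f S ↔ ∃ Q : ℕ → Set X, (∀ n, IsClosed (Q n)) ∧ (∀ n, ContinuousOn f (Q n)) ∧
      S ⊆ ⋃ n, Q n := by
  constructor
  · rintro ⟨F, ⟨E, hEcl, rfl⟩, hSF, C, hCcl, hCuniv, hCco⟩
    choose H hHcl hHC using fun k => isClosed_induced_iff.mp (hCcl k)
    refine ⟨fun n => E n.unpair.1 ∩ H n.unpair.2, fun n => (hEcl _).inter (hHcl _),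
      fun n => ?_, ?_⟩
    · have hcont := IsInducing.subtypeVal.continuousOn_image_iff.mpr (hCco n.unpair.2)
      rw [← hHC, Subtype.image_preimage_coe] at hcont
      exact hcont.mono (inter_subset_inter_left _ (subset_iUnion E _))
    · intro z hz
      obtain ⟨m, hm⟩ := mem_iUnion.mp (hSF hz)
      have hzC : (⟨z, hSF hz⟩ : ↥(⋃ n, E n)) ∈ ⋃ k, C k := hCuniv ▸ mem_univ _
      obtain ⟨k, hk⟩ := mem_iUnion.mp hzC
      rw [← hHC k] at hk
      rw [iUnion_unpair fun i j => E i ∩ H j]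
      exact mem_iUnion₂.mpr ⟨m, k, hm, hk⟩
  · rintro ⟨Q, hcl, hco, hSQ⟩
    refine ⟨⋃ n, Q n, ⟨Q, hcl, rfl⟩, hSQ, fun n => Subtype.val ⁻¹' Q n,
      fun n => (hcl n).preimage_val, ?_, fun n => ?_⟩
    · rw [← preimage_iUnion, Subtype.coe_preimage_self]
    · exact (hco n).comp continuous_subtype_val.continuousOn fun _ hz => hz

theorem memIf_empty : MemIf f ∅ :=
  memIf_iff_exists_closed_cover.mpr
    ⟨fun _ => ∅, fun _ => isClosed_empty, fun _ => continuousOn_empty f, empty_subset _⟩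

theorem MemIf.union (hS : MemIf f S) (hT : MemIf f T) : MemIf f (S ∪ T) := by
  obtain ⟨Q, hQcl, hQco, hSQ⟩ := memIf_iff_exists_closed_cover.mp hS
  obtain ⟨R, hRcl, hRco, hTR⟩ := memIf_iff_exists_closed_cover.mp hT
  refine memIf_iff_exists_closed_cover.mpr ⟨fun n => Q n ∪ R n,
    fun n => (hQcl n).union (hRcl n),
    fun n => (hQco n).union_of_isClosed (hRco n) (hQcl n) (hRcl n), ?_⟩
  rw [iUnion_union_distrib]
  exact union_subset_union hSQ hTR

theorem MemIf.iUnion {G : ℕ → Set X} (h : ∀ n, MemIf f (G n)) : MemIf f (⋃ n, G n) := by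
  choose Q hcl hco hGQ using fun n => memIf_iff_exists_closed_cover.mp (h n)
  refine memIf_iff_exists_closed_cover.mpr ⟨fun n => Q n.unpair.1 n.unpair.2,
    fun n => hcl _ _, fun n => hco _ _, ?_⟩
  rw [iUnion_unpair Q]
  exact iUnion_mono hGQ

theorem memIf_of_isFsigma_continuousOn (hS : IsFsigma S) (hf : ContinuousOn f S) :
    MemIf f S := by
  obtain ⟨C, hC, rfl⟩ := hS
  exact memIf_iff_exists_closed_cover.mpr
    ⟨C, hC, fun n => hf.mono (subset_iUnion C n), subset_rfl⟩

end MemIf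

section Locality

variable {X Y : Type*} [TopologicalSpace X] [TopologicalSpace Y] {f : X → Y} {S : Set X}

/-- The pieces are glued along a locally finite open refinement `v` of the witnessing cover:
perfect normality writes each `v i` as a countable union of closed sets, and locally finite
unions of closed pieces stay closed and keep `f` continuous. -/
theorem memIf_of_forall_exists_isOpen [ParacompactSpace X]
    (hGδ : ∀ s : Set X, IsClosed s → IsGδ s)
    (h : ∀ x, ∃ V, IsOpen V ∧ x ∈ V ∧ MemIf f (S ∩ V)) : MemIf f S := by
  let ι := {V : Set X // IsOpen V ∧ MemIf f (S ∩ V)}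
  have hcov : ⋃ i : ι, i.1 = univ := eq_univ_of_forall fun x =>
    let ⟨V, hVo, hxV, hV⟩ := h x
    mem_iUnion.mpr ⟨⟨V, hVo, hV⟩, hxV⟩
  obtain ⟨v, hvo, hvcov, hvlf, hvu⟩ := precise_refinement (fun i : ι => i.1) (fun i => i.2.1) hcov
  choose Q hQcl hQco hSQ using fun i : ι => memIf_iff_exists_closed_cover.mp i.2.2
  choose R hRcl hRv using fun i => (hvo i).isFsigma hGδ
  have hlf : ∀ k l, LocallyFinite fun i => Q i k ∩ R i l := fun k l =>
    hvlf.subset fun i => inter_subset_right.trans ((hRv i).symm ▸ subset_iUnion (R i) l)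
  refine memIf_iff_exists_closed_cover.mpr ⟨fun n => ⋃ i, Q i n.unpair.1 ∩ R i n.unpair.2,
    fun n => (hlf _ _).isClosed_iUnion fun i => (hQcl i _).inter (hRcl i _),
    fun n => (hlf _ _).continuousOn_iUnion (fun i => (hQcl i _).inter (hRcl i _))
      fun i => (hQco i _).mono inter_subset_left, fun z hz => ?_⟩
  obtain ⟨i, hi⟩ := mem_iUnion.mp (hvcov.symm ▸ mem_univ z)
  obtain ⟨k, hk⟩ := mem_iUnion.mp (hSQ i ⟨hz, hvu i hi⟩)
  obtain ⟨l, hl⟩ := mem_iUnion.mp (hRv i ▸ hi)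
  rw [iUnion_unpair fun k l => ⋃ i, Q i k ∩ R i l]
  exact mem_iUnion₂.mpr ⟨k, l, mem_iUnion.mpr ⟨i, hk, hl⟩⟩

def irreducibleLocus (f : X → Y) (S : Set X) : Set X :=
  {x | ∀ V, IsOpen V → x ∈ V → ¬ MemIf f (S ∩ V)}

theorem notMem_irreducibleLocus_iff {x : X} :
    x ∉ irreducibleLocus f S ↔ ∃ V, IsOpen V ∧ x ∈ V ∧ MemIf f (S ∩ V) := by
  simp only [irreducibleLocus, mem_ofPred_eq, not_forall, not_not, exists_prop]

theorem isClosed_irreducibleLocus : IsClosed (irreducibleLocus f S) := by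
  refine isOpen_compl_iff.mp (isOpen_iff_forall_mem_open.mpr fun x hx => ?_)
  obtain ⟨V, hVo, hxV, hV⟩ := notMem_irreducibleLocus_iff.mp hx
  exact ⟨V, fun y hy hyL => hyL V hVo hy hV, hVo, hxV⟩

theorem memIf_diff_irreducibleLocus [ParacompactSpace X]
    (hGδ : ∀ s : Set X, IsClosed s → IsGδ s) : MemIf f (S \ irreducibleLocus f S) := by
  obtain ⟨E, hEcl, hE⟩ :=
    (isClosed_irreducibleLocus (f := f) (S := S)).isOpen_compl.isFsigma hGδ
  rw [sdiff_eq, hE, inter_iUnion]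
  refine MemIf.iUnion fun m => memIf_of_forall_exists_isOpen hGδ fun x => ?_
  by_cases hx : x ∈ E m
  · obtain ⟨V, hVo, hxV, hV⟩ :=
      notMem_irreducibleLocus_iff.mp (hE ▸ mem_iUnion_of_mem m hx : x ∈ (irreducibleLocus f S)ᶜ)
    exact ⟨V, hVo, hxV, hV.mono (inter_subset_inter_left _ inter_subset_left)⟩
  · refine ⟨(E m)ᶜ, (hEcl m).isOpen_compl, hx, ?_⟩
    rw [inter_assoc, inter_compl_self, inter_empty]
    exact memIf_empty

end Locality

section Irreducibility

variable {X Y : Type*} [TopologicalSpace X] [TopologicalSpace Y] {f : X → Y} {X' : Set X}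

theorem IrredOutside.not_memIf {x : X} {U : Set Y} (h : IrredOutside f x X' U) :
    ¬ MemIf f X' := fun hX' =>
  h univ isOpen_univ (mem_univ x) (hX'.mono fun _ hz => hz.1.2)

/-- For strongly disjoint `U` and `U'`, the sets `U^f` and `U'^f` cover `X`. -/
theorem MemIf.inter_of_disjoint_closure {U U' : Set Y} {V V' : Set X}
    (hUU' : Disjoint (closure U) (closure U')) (h : MemIf f (Af f U ∩ X' ∩ V))
    (h' : MemIf f (Af f U' ∩ X' ∩ V')) : MemIf f (X' ∩ (V ∩ V')) := by
  refine (h.union h').mono fun z ⟨hzX', hzV, hzV'⟩ => ?_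
  by_cases hz : f z ∈ closure U
  · exact Or.inr ⟨⟨hUU'.notMem_of_mem_left hz, hzX'⟩, hzV'⟩
  · exact Or.inl ⟨⟨hz, hzX'⟩, hzV⟩

theorem exists_memIf_of_forall_not_irredOutside [RegularSpace Y] {A : Set Y}
    (hno : ∀ x ∈ closure X' ∩ Af f A, ∀ U : Set Y, IsOpen U → closure U ∩ closure A = ∅ →
      f x ∈ U → ¬ IrredOutside f x X' U)
    {x : X} (hx : x ∈ closure X' ∩ Af f A) {O : Set Y} (hO : IsOpen O) (hxO : f x ∈ O) :
    ∃ U : Set Y, ∃ V : Set X, IsOpen V ∧ x ∈ V ∧ closure U ⊆ O ∧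
      MemIf f (Af f U ∩ X' ∩ V) := by
  obtain ⟨t, ht, htcl, htO⟩ := exists_mem_nhds_isClosed_subset
    ((hO.inter isClosed_closure.isOpen_compl).mem_nhds ⟨hxO, hx.2⟩)
  have hUt : closure (interior t) ⊆ t := htcl.closure_subset_iff.mpr interior_subset
  have hUA : closure (interior t) ∩ closure A = ∅ :=
    disjoint_iff_inter_eq_empty.mp (subset_compl_iff_disjoint_right.mp fun y hy => (htO (hUt hy)).2)
  have := hno x hx (interior t) isOpen_interior hUA (mem_interior_iff_mem_nhds.mpr ht)
  simp only [IrredOutside, not_forall, not_not, exists_prop] at this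
  obtain ⟨V, hVo, hxV, hV⟩ := this
  exact ⟨interior t, V, hVo, hxV, fun y hy => (htO (hUt hy)).1, hV⟩

/-- Were `f y` to leave a neighbourhood `closure U` of `f x` for some `y` near `x` in the locus,
a neighbourhood of `f y` strongly disjoint from `U` would put `X'` into `I_f` near `y`. -/
theorem continuousOn_irreducibleLocus_of_forall_not_irredOutside [RegularSpace Y] {A : Set Y}
    (hno : ∀ x ∈ closure X' ∩ Af f A, ∀ U : Set Y, IsOpen U → closure U ∩ closure A = ∅ →
      f x ∈ U → ¬ IrredOutside f x X' U) :
    ContinuousOn f (Af f A ∩ (closure X' ∩ irreducibleLocus f X')) := by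
  intro x hx
  refine tendsto_nhds.mpr fun O hO hxO => ?_
  obtain ⟨U, V, hVo, hxV, hUO, hV⟩ := exists_memIf_of_forall_not_irredOutside hno
    ⟨hx.2.1, hx.1⟩ hO hxO
  refine mem_nhdsWithin.mpr ⟨V, hVo, hxV, fun y ⟨hyV, hy⟩ => by_contra fun hyO => ?_⟩
  obtain ⟨U', V', hV'o, hyV', hU'U, hV'⟩ := exists_memIf_of_forall_not_irredOutside hno
    ⟨hy.2.1, hy.1⟩ isClosed_closure.isOpen_compl fun h => hyO (hUO h)
  exact hy.2.2 _ (hVo.inter hV'o) ⟨hyV, hyV'⟩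
    (hV.inter_of_disjoint_closure (subset_compl_iff_disjoint_left.mp hU'U) hV')

end Irreducibility

theorem statement8_general {X Y : Type*} [TopologicalSpace X] [TopologicalSpace Y]
    [ParacompactSpace X] (hGdelta : ∀ s : Set X, IsClosed s → IsGδ s)
    [RegularSpace Y]
    (f : X → Y) (hf : Sigma02Measurable f)
    (X' : Set X) (A : Set Y) (hsub : X' ⊆ Af f A) :
    ¬ MemIf f X' ↔
      ∃ x ∈ closure X' ∩ Af f A, ∃ U : Set Y, IsOpen U ∧
        closure U ∩ closure A = ∅ ∧ f x ∈ U ∧ IrredOutside f x X' U := by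
  refine ⟨fun hX' => ?_, fun ⟨_, _, _, _, _, _, hirr⟩ => hirr.not_memIf⟩
  by_contra! hno
  have hAf : IsFsigma (Af f A) := hf _ isClosed_closure.isOpen_compl
  have hcont : MemIf f (Af f A ∩ (closure X' ∩ irreducibleLocus f X')) :=
    memIf_of_isFsigma_continuousOn
      (hAf.inter_isClosed (isClosed_closure.inter isClosed_irreducibleLocus))
      (continuousOn_irreducibleLocus_of_forall_not_irredOutside hno)
  refine hX' (((memIf_diff_irreducibleLocus (S := X') hGdelta).union hcont).mono fun z hz => ?_)
  by_cases hzL : z ∈ irreducibleLocus f X'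
  · exact Or.inr ⟨hsub hz, subset_closure hz, hzL⟩
  · exact Or.inl ⟨hz, hzL⟩

/-- Key dichotomy lemma: for a Σ⁰₂-measurable f on a perfectly paracompact
space to a regular space, with X′ ⊆ A^f and A open, X′ ∉ I_f iff there exist
x ∈ cl(X′) ∩ A^f and an open U ⊆ Y strongly disjoint from A with f(x) ∈ U such
that (x, X′) is f-irreducible outside U. -/
theorem statement8 {X Y : Type*} [TopologicalSpace X] [TopologicalSpace Y]
    [ParacompactSpace X] (hGdelta : ∀ s : Set X, IsClosed s → IsGδ s)
    [RegularSpace Y]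
    (f : X → Y) (hf : Sigma02Measurable f)
    (X' : Set X) (A : Set Y) (hA : IsOpen A) (hsub : X' ⊆ Af f A) :
    ¬ MemIf f X' ↔
      ∃ x ∈ closure X' ∩ Af f A, ∃ U : Set Y, IsOpen U ∧
        closure U ∩ closure A = ∅ ∧ f x ∈ U ∧ IrredOutside f x X' U :=
  statement8_general hGdelta f hf X' A hsub
end

section
/- Let f : X → Y be a mapping between topological spaces, x ∈ X, X′ ⊆ X, A ⊆ Y, and let U₀, …, U_k be a finite sequence of pairwise strongly disjoint open subsets of Y. If (x, X′) is f-irreducible outside A, then there is at most one index i ∈ {0, …, k} such that (x, X′) is not f-irreducible outside A ∪ U_i. -/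
open Set Topology

section Aux

variable {X Y : Type*} [TopologicalSpace X] [TopologicalSpace Y]

lemma contOn_image_val_iff (f : X → Y) (F : Set X) (s : Set ↥F) :
    ContinuousOn (F.restrict f) s ↔ ContinuousOn f ((↑) '' s) := by
  constructor
  · rintro h z ⟨w, hw, rfl⟩
    have hw' := h w hw
    unfold ContinuousWithinAt at *
    rw [← Topology.IsEmbedding.subtypeVal.map_nhdsWithin_eq, Filter.tendsto_map'_iff]
    exact hw'
  · intro h
    exact h.comp continuous_subtype_val.continuousOn (mapsTo_image _ _)

lemma pw_iff (f : X → Y) (F : Set X) :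
    PiecewiseContinuous (F.restrict f) ↔
      ∃ T : ℕ → Set X, (∀ n, ∃ C, IsClosed C ∧ T n = C ∩ F) ∧ F ⊆ ⋃ n, T n ∧
        ∀ n, ContinuousOn f (T n) := by
  constructor
  · rintro ⟨C, hcl, hun, hcont⟩
    refine ⟨fun n => (↑) '' C n, ?_, ?_, ?_⟩
    · intro n
      obtain ⟨C', hC', hC'eq⟩ := isClosed_induced_iff.mp (hcl n)
      refine ⟨C', hC', ?_⟩
      show (↑) '' C n = C' ∩ F
      rw [← hC'eq, Subtype.image_preimage_coe]
      exact (inter_comm _ _)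
    · intro z hz
      have : (⟨z, hz⟩ : ↥F) ∈ ⋃ n, C n := by rw [hun]; trivial
      obtain ⟨n, hn⟩ := mem_iUnion.mp this
      exact mem_iUnion.mpr ⟨n, ⟨⟨z, hz⟩, hn, rfl⟩⟩
    · intro n
      exact (contOn_image_val_iff f F (C n)).mp (hcont n)
  · rintro ⟨T, hT, hcov, hcont⟩
    refine ⟨fun n => (↑) ⁻¹' T n, ?_, ?_, ?_⟩
    · intro n
      obtain ⟨C, hC, hCeq⟩ := hT n
      have h2 : ((↑) ⁻¹' T n : Set ↥F) = (↑) ⁻¹' C := by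
        rw [hCeq]; ext w; simp [w.2]
      show IsClosed ((↑) ⁻¹' T n : Set ↥F)
      rw [h2]
      exact hC.preimage continuous_subtype_val
    · ext w
      simp only [mem_iUnion, mem_univ, iff_true, mem_preimage]
      exact mem_iUnion.mp (hcov w.2)
    · intro n
      rw [contOn_image_val_iff]
      exact (hcont n).mono (by rw [Subtype.image_preimage_coe]; exact inter_subset_right)

lemma isFsigma_union {s t : Set X} (hs : IsFsigma s) (ht : IsFsigma t) :
    IsFsigma (s ∪ t) := by
  obtain ⟨C, hC, rfl⟩ := hs
  obtain ⟨D, hD, rfl⟩ := ht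
  exact ⟨fun n => C n ∪ D n, fun n => (hC n).union (hD n), (iUnion_union_distrib C D).symm⟩

lemma memIf_mono {f : X → Y} {A B : Set X} (h : A ⊆ B) (hB : MemIf f B) : MemIf f A := by
  obtain ⟨F, hFσ, hBF, hpw⟩ := hB
  exact ⟨F, hFσ, h.trans hBF, hpw⟩

lemma memIf_union {f : X → Y} {A B : Set X} (hA : MemIf f A) (hB : MemIf f B) :
    MemIf f (A ∪ B) := by
  obtain ⟨F1, hF1σ, hAF1, hpw1⟩ := hA
  obtain ⟨F2, hF2σ, hBF2, hpw2⟩ := hB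
  obtain ⟨D1, hD1cl, hF1eq⟩ := hF1σ
  obtain ⟨D2, hD2cl, hF2eq⟩ := hF2σ
  obtain ⟨T1, hT1, hcov1, hcont1⟩ := (pw_iff f F1).mp hpw1
  obtain ⟨T2, hT2, hcov2, hcont2⟩ := (pw_iff f F2).mp hpw2
  refine ⟨F1 ∪ F2, isFsigma_union ⟨D1, hD1cl, hF1eq⟩ ⟨D2, hD2cl, hF2eq⟩,
    union_subset_union hAF1 hBF2, ?_⟩
  rw [pw_iff]
  have hD1sub : ∀ m, D1 m ⊆ F1 := fun m => hF1eq ▸ subset_iUnion D1 m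
  have hD2sub : ∀ m, D2 m ⊆ F2 := fun m => hF2eq ▸ subset_iUnion D2 m
  let T : (ℕ × ℕ) ⊕ (ℕ × ℕ) → Set X := fun p =>
    Sum.rec (fun q => T1 q.1 ∩ D1 q.2) (fun q => T2 q.1 ∩ D2 q.2) p
  have hTform : ∀ p, ∃ C, IsClosed C ∧ T p = C ∩ (F1 ∪ F2) := by
    rintro (⟨n, m⟩ | ⟨n, m⟩)
    · obtain ⟨C, hC, hCeq⟩ := hT1 n
      refine ⟨C ∩ D1 m, hC.inter (hD1cl m), ?_⟩
      have : T1 n ∩ D1 m = C ∩ D1 m := by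
        rw [hCeq]; ext z; constructor
        · rintro ⟨⟨h1, _⟩, h2⟩; exact ⟨h1, h2⟩
        · rintro ⟨h1, h2⟩; exact ⟨⟨h1, hD1sub m h2⟩, h2⟩
      simp only [T, this]
      rw [eq_comm, inter_eq_left]
      exact fun z hz => Or.inl (hD1sub m hz.2)
    · obtain ⟨C, hC, hCeq⟩ := hT2 n
      refine ⟨C ∩ D2 m, hC.inter (hD2cl m), ?_⟩
      have : T2 n ∩ D2 m = C ∩ D2 m := by
        rw [hCeq]; ext z; constructor
        · rintro ⟨⟨h1, _⟩, h2⟩; exact ⟨h1, h2⟩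
        · rintro ⟨h1, h2⟩; exact ⟨⟨h1, hD2sub m h2⟩, h2⟩
      simp only [T, this]
      rw [eq_comm, inter_eq_left]
      exact fun z hz => Or.inr (hD2sub m hz.2)
  have hTcov : F1 ∪ F2 ⊆ ⋃ p, T p := by
    rintro z (hz | hz)
    · obtain ⟨n, hn⟩ := mem_iUnion.mp (hcov1 hz)
      obtain ⟨m, hm⟩ := mem_iUnion.mp (by rw [← hF1eq]; exact hz : z ∈ ⋃ m, D1 m)
      exact mem_iUnion.mpr ⟨Sum.inl (n, m), ⟨hn, hm⟩⟩
    · obtain ⟨n, hn⟩ := mem_iUnion.mp (hcov2 hz)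
      obtain ⟨m, hm⟩ := mem_iUnion.mp (by rw [← hF2eq]; exact hz : z ∈ ⋃ m, D2 m)
      exact mem_iUnion.mpr ⟨Sum.inr (n, m), ⟨hn, hm⟩⟩
  have hTcont : ∀ p, ContinuousOn f (T p) := by
    rintro (⟨n, m⟩ | ⟨n, m⟩)
    · exact (hcont1 n).mono inter_subset_left
    · exact (hcont2 n).mono inter_subset_left
  refine ⟨fun k => T (Denumerable.ofNat ((ℕ × ℕ) ⊕ (ℕ × ℕ)) k), fun k => hTform _, ?_,
    fun k => hTcont _⟩
  intro z hz
  obtain ⟨p, hp⟩ := mem_iUnion.mp (hTcov hz)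
  exact mem_iUnion.mpr ⟨Encodable.encode p, by rwa [Denumerable.ofNat_encode]⟩

end Aux

/-- If (x, X′) is f-irreducible outside A and U₀, …, U_k are pairwise strongly
disjoint open sets, then (x, X′) fails to be f-irreducible outside A ∪ Uᵢ for
at most one index i. -/
theorem statement9 {X Y : Type*} [TopologicalSpace X] [TopologicalSpace Y]
    (f : X → Y) (x : X) (X' : Set X) (A : Set Y) (k : ℕ)
    (U : Fin (k + 1) → Set Y) (hUopen : ∀ i, IsOpen (U i))
    (hUdisj : Pairwise fun i j => closure (U i) ∩ closure (U j) = ∅)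
    (hirr : IrredOutside f x X' A) :
    ∀ i j : Fin (k + 1), ¬ IrredOutside f x X' (A ∪ U i) →
      ¬ IrredOutside f x X' (A ∪ U j) → i = j := by
  intro i j hi hj
  by_contra hij
  simp only [IrredOutside, not_forall] at hi hj
  obtain ⟨Vi, hViopen, hxVi, hVi⟩ := hi
  obtain ⟨Vj, hVjopen, hxVj, hVj⟩ := hj
  simp only [not_not] at hVi hVj
  apply hirr (Vi ∩ Vj) (hViopen.inter hVjopen) ⟨hxVi, hxVj⟩
  have hsub : Af f A ∩ X' ∩ (Vi ∩ Vj) ⊆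
      (Af f (A ∪ U i) ∩ X' ∩ Vi) ∪ (Af f (A ∪ U j) ∩ X' ∩ Vj) := by
    rintro z ⟨⟨hzA, hzX'⟩, hzVi, hzVj⟩
    have hdisj : closure (U i) ∩ closure (U j) = ∅ := hUdisj hij
    have : f z ∉ closure (U i) ∨ f z ∉ closure (U j) := by
      by_contra h
      push_neg at h
      exact absurd (hdisj ▸ mem_inter h.1 h.2) (notMem_empty _)
    rcases this with h | h
    · left
      refine ⟨⟨?_, hzX'⟩, hzVi⟩
      simp only [Af, mem_preimage, mem_compl_iff, closure_union, mem_union] at *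
      tauto
    · right
      refine ⟨⟨?_, hzX'⟩, hzVj⟩
      simp only [Af, mem_preimage, mem_compl_iff, closure_union, mem_union] at *
      tauto
  exact memIf_mono hsub (memIf_union hVi hVj)
end
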